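/- Let (T, S) be a labeled tree in the family 𝒯, obtained from (T', S') ∈ 𝒯 by operation 𝒪 attaching a path u_1u_2u_3u_4u_5u_6 via edge u_3v to a B-labeled vertex v of T'. Then γ_sp(T) = γ_sp(T') + 3. -/

import Mathlib

open SimpleGraph

/-- `S` is a super dominating set of `G`: every vertex `u ∉ S` has some `v ∈ S`
with `N(v) ∩ Sᶜ = {u}`. -/
def SuperDomSet {V : Type} (G : SimpleGraph V) (S : Set V) : Prop :=
  ∀ u ∈ Sᶜ, ∃ v ∈ S, G.neighborSet v ∩ Sᶜ = {u}

/-- The super domination number `γ_sp(G)`. -/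
noncomputable def superDomNum {V : Type} (G : SimpleGraph V) : ℕ :=
  sInf {n | ∃ S : Set V, SuperDomSet G S ∧ S.ncard = n}

/-- `S` is a dominating set of `G`. -/
def DomSet {V : Type} (G : SimpleGraph V) (S : Set V) : Prop :=
  ∀ u ∉ S, ∃ v ∈ S, G.Adj v u

/-- The domination number `γ(G)`. -/
noncomputable def domNum {V : Type} (G : SimpleGraph V) : ℕ :=
  sInf {n | ∃ S : Set V, DomSet G S ∧ S.ncard = n}

/-- `S` is a total dominating set of `G`: every vertex has a neighbor in `S`. -/
def TotalDomSet {V : Type} (G : SimpleGraph V) (S : Set V) : Prop :=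
  ∀ u : V, ∃ v ∈ S, G.Adj v u

/-- The total domination number `γ_t(G)`. -/
noncomputable def totalDomNum {V : Type} (G : SimpleGraph V) : ℕ :=
  sInf {n | ∃ S : Set V, TotalDomSet G S ∧ S.ncard = n}

/-- A leaf is a vertex of degree 1. -/
def IsLeaf {V : Type} (G : SimpleGraph V) (v : V) : Prop :=
  (G.neighborSet v).ncard = 1

/-- A support vertex is a vertex adjacent to a leaf. -/
def IsSupport {V : Type} (G : SimpleGraph V) (v : V) : Prop :=
  ∃ u, G.Adj v u ∧ IsLeaf G u

/-- Attach a path `u₁u₂u₃u₄u₅u₆` (indices `0,…,5`) to `G` together with the edge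
joining `u₃` (index `2`) to `v`. -/
def attachPath6 {V : Type} (G : SimpleGraph V) (v : V) : SimpleGraph (V ⊕ Fin 6) where
  Adj x y :=
    match x, y with
    | Sum.inl a, Sum.inl b => G.Adj a b
    | Sum.inl a, Sum.inr i => a = v ∧ (i : ℕ) = 2
    | Sum.inr i, Sum.inl a => a = v ∧ (i : ℕ) = 2
    | Sum.inr i, Sum.inr j => (SimpleGraph.pathGraph 6).Adj i j
  symm := by
    constructor
    rintro (a | i) (b | j) h
    · exact h.symm
    · exact h
    · exact h
    · exact (SimpleGraph.pathGraph 6).adj_symm h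
  loopless := by
    constructor
    rintro (a | i) h
    · exact G.irrefl h
    · exact (SimpleGraph.pathGraph 6).irrefl h

/-- Vertex statuses for labeled trees. -/
inductive Status : Type
  | A | B | C
deriving DecidableEq

/-- The labeling of the (attached or base) path `P₆`: statuses `C,A,B,B,A,C`. -/
def pathLabel : Fin 6 → Status := fun i =>
  if (i : ℕ) = 0 ∨ (i : ℕ) = 5 then Status.C
  else if (i : ℕ) = 1 ∨ (i : ℕ) = 4 then Status.A
  else Status.B

/-- The family 𝒯 of labeled trees: it contains `(P₆, S₀)` (leaves labeled `C`,
support vertices labeled `A`, middle vertices labeled `B`) and is closed under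
operation 𝒪: for a vertex `v` of status `B`, attach a path `u₁…u₆` by the edge
`u₃v`, labeling `u₁,…,u₆` with `C,A,B,B,A,C`. -/
inductive InT : (W : Type) → SimpleGraph W → (W → Status) → Prop
  | base : InT (Fin 6) (SimpleGraph.pathGraph 6) pathLabel
  | step {W : Type} {G : SimpleGraph W} {L : W → Status} (h : InT W G L)
      (v : W) (hv : L v = Status.B) :
      InT (W ⊕ Fin 6) (attachPath6 G v)
        (fun x => match x with | Sum.inl a => L a | Sum.inr i => pathLabel i)

/-!
Upper bound: extend a minimum super dominating set of `G` by `{u₂, u₃, u₆}` if it contains `v`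
and by `{u₁, u₄, u₅}` otherwise. Both triples super dominate `P₆`, and the new edge `vu₃` joins
two vertices on the same side of the set, so it disturbs no private neighbour.

Lower bound: a super dominating set `S` of the new tree meets `{u₁, u₂}` and `{u₅, u₆}` (the
leaves), and meets `{u₃, u₄}` unless `u₅` privately dominates `u₄`, which forces `u₆ ∈ S`; so it
has at least three path vertices. Its trace on `G` is super dominating unless `v` is privately
dominated only by `u₃`; then `u₂, u₃, u₄` and one of `u₅, u₆` lie in `S`, and adding `v` to the
trace repairs it.
-/

section SuperDomination

variable {V : Type} {G : SimpleGraph V} {S : Set V} {w u : V}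

theorem superDomSet_univ (G : SimpleGraph V) : SuperDomSet G Set.univ := by
  simp [SuperDomSet]

theorem SuperDomSet.superDomNum_le (hS : SuperDomSet G S) : superDomNum G ≤ S.ncard :=
  Nat.sInf_le ⟨S, hS, rfl⟩

theorem exists_superDomSet_ncard_eq_superDomNum (G : SimpleGraph V) :
    ∃ S, SuperDomSet G S ∧ S.ncard = superDomNum G :=
  Nat.sInf_mem (s := {n | ∃ S : Set V, SuperDomSet G S ∧ S.ncard = n})
    ⟨_, Set.univ, superDomSet_univ G, rfl⟩

theorem adj_of_neighborSet_inter_compl_eq_singleton (h : G.neighborSet w ∩ Sᶜ = {u}) :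
    G.Adj w u :=
  (h.symm.subset (Set.mem_singleton u)).1

theorem mem_of_neighborSet_inter_compl_eq_singleton (h : G.neighborSet w ∩ Sᶜ = {u})
    {x : V} (hx : G.Adj w x) (hxu : x ≠ u) : x ∈ S := by
  by_contra hxS
  exact hxu (h.subset ⟨hx, hxS⟩)

theorem neighborSet_inter_compl_eq_singleton_of_subset (h : G.neighborSet w ∩ Sᶜ = {u})
    {T : Set V} (hST : S ⊆ T) (hu : u ∉ T) : G.neighborSet w ∩ Tᶜ = {u} :=
  Set.Subset.antisymm (h ▸ Set.inter_subset_inter_right _ (Set.compl_subset_compl.2 hST))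
    (Set.singleton_subset_iff.2 ⟨adj_of_neighborSet_inter_compl_eq_singleton h, hu⟩)

theorem SuperDomSet.exists_adj (hS : SuperDomSet G S) (hu : u ∉ S) : ∃ w ∈ S, G.Adj w u := by
  obtain ⟨w, hw, h⟩ := hS u hu
  exact ⟨w, hw, adj_of_neighborSet_inter_compl_eq_singleton h⟩

theorem SimpleGraph.Embedding.neighborSet_inter_compl_preimage {W : Type} {H : SimpleGraph W}
    (f : G ↪g H) {S : Set W} (h : H.neighborSet (f w) ∩ Sᶜ = {f u}) :
    G.neighborSet w ∩ (f ⁻¹' S)ᶜ = {u} := by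
  ext x
  simpa [f.injective.eq_iff] using Set.ext_iff.1 h (f x)

theorem SuperDomSet.sum {W : Type} {H : SimpleGraph W} {P : Set W} (hS : SuperDomSet G S)
    (hP : SuperDomSet H P) : SuperDomSet (G ⊕g H) (Sum.inl '' S ∪ Sum.inr '' P) := by
  rintro (a | a) ha
  · obtain ⟨b, hb, h⟩ := hS a (by simpa using ha)
    refine ⟨Sum.inl b, by simpa using hb, ?_⟩
    ext (x | x)
    · simpa using Set.ext_iff.1 h x
    · simp
  · obtain ⟨b, hb, h⟩ := hP a (by simpa using ha)
    refine ⟨Sum.inr b, by simpa using hb, ?_⟩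
    ext (x | x)
    · simp
    · simpa using Set.ext_iff.1 h x

theorem SuperDomSet.sup_edge (hS : SuperDomSet G S) {a b : V} (hab : a ∈ S ↔ b ∈ S) :
    SuperDomSet (G ⊔ edge a b) S := by
  intro u hu
  obtain ⟨w, hw, h⟩ := hS u hu
  refine ⟨w, hw, h ▸ ?_⟩
  ext x
  simp only [Set.mem_inter_iff, mem_neighborSet, sup_adj, edge_adj, Set.mem_compl_iff]
  constructor
  · rintro ⟨hx | ⟨(⟨rfl, rfl⟩ | ⟨rfl, rfl⟩), -⟩, hxS⟩
    exacts [⟨hx, hxS⟩, absurd (hab.1 hw) hxS, absurd (hab.2 hw) hxS]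
  · exact fun hx => ⟨Or.inl hx.1, hx.2⟩

end SuperDomination

theorem Set.ncard_image_inl_union_image_inr {α β : Type} {s : Set α} {t : Set β}
    (hs : s.Finite) (ht : t.Finite) :
    (Sum.inl '' s ∪ Sum.inr '' t).ncard = s.ncard + t.ncard := by
  rw [Set.ncard_union_eq Set.disjoint_image_inl_image_inr (hs.image _) (ht.image _),
    Set.ncard_image_of_injective _ Sum.inl_injective,
    Set.ncard_image_of_injective _ Sum.inr_injective]

theorem three_le_card_of_fin6 (P : Finset (Fin 6)) (h01 : 0 ∈ P ∨ 1 ∈ P) (h45 : 4 ∈ P ∨ 5 ∈ P)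
    (h23 : 2 ∈ P ∨ 3 ∈ P ∨ 4 ∈ P ∧ 5 ∈ P) : 3 ≤ P.card := by
  revert P; decide

theorem four_le_card_of_fin6 (P : Finset (Fin 6)) (h1 : 1 ∈ P) (h2 : 2 ∈ P) (h3 : 3 ∈ P)
    (h45 : 4 ∈ P ∨ 5 ∈ P) : 4 ≤ P.card := by
  revert P; decide

section AttachPath6

variable {V : Type} {G : SimpleGraph V} {v : V}

@[simp] theorem attachPath6_adj_inl_inl {a b : V} :
    (attachPath6 G v).Adj (Sum.inl a) (Sum.inl b) ↔ G.Adj a b := Iff.rfl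

@[simp] theorem attachPath6_adj_inl_inr {a : V} {i : Fin 6} :
    (attachPath6 G v).Adj (Sum.inl a) (Sum.inr i) ↔ a = v ∧ (i : ℕ) = 2 := Iff.rfl

@[simp] theorem attachPath6_adj_inr_inl {a : V} {i : Fin 6} :
    (attachPath6 G v).Adj (Sum.inr i) (Sum.inl a) ↔ a = v ∧ (i : ℕ) = 2 := Iff.rfl

@[simp] theorem attachPath6_adj_inr_inr {i j : Fin 6} :
    (attachPath6 G v).Adj (Sum.inr i) (Sum.inr j) ↔ (pathGraph 6).Adj i j := Iff.rfl

theorem attachPath6_eq_sum_sup_edge (G : SimpleGraph V) (v : V) :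
    attachPath6 G v = (G ⊕g pathGraph 6) ⊔ edge (Sum.inl v) (Sum.inr 2) := by
  ext (a | i) (b | j) <;> simp [edge_adj, Fin.ext_iff, eq_comm, and_comm]

def SimpleGraph.Embedding.attachPath6Inl (G : SimpleGraph V) (v : V) : G ↪g attachPath6 G v where
  toFun := Sum.inl
  inj' := Sum.inl_injective
  map_rel_iff' := Iff.rfl

theorem SuperDomSet.attachPath6_inl_witness {S : Set (V ⊕ Fin 6)}
    (hS : SuperDomSet (attachPath6 G v) S) {u : V} (hu : Sum.inl u ∉ S) :
    (∃ b ∈ Sum.inl ⁻¹' S, G.neighborSet b ∩ (Sum.inl ⁻¹' S)ᶜ = {u}) ∨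
      u = v ∧ Sum.inr 2 ∈ S ∧ (attachPath6 G v).neighborSet (Sum.inr 2) ∩ Sᶜ = {Sum.inl v} := by
  obtain ⟨b | j, hmem, h⟩ := hS _ hu
  · exact Or.inl ⟨b, hmem, (Embedding.attachPath6Inl G v).neighborSet_inter_compl_preimage h⟩
  · obtain ⟨rfl, hj⟩ := adj_of_neighborSet_inter_compl_eq_singleton h
    obtain rfl : j = 2 := Fin.ext hj
    exact Or.inr ⟨rfl, hmem, h⟩

theorem SuperDomSet.insert_preimage_inl {S : Set (V ⊕ Fin 6)}
    (hS : SuperDomSet (attachPath6 G v) S) : SuperDomSet G (insert v (Sum.inl ⁻¹' S)) := by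
  intro u hu
  rw [Set.mem_compl_iff, Set.mem_insert_iff, not_or] at hu
  rcases hS.attachPath6_inl_witness hu.2 with ⟨b, hb, h⟩ | ⟨huv, -⟩
  · exact ⟨b, Or.inr hb, neighborSet_inter_compl_eq_singleton_of_subset h
      (Set.subset_insert _ _) (by simpa using hu)⟩
  · exact absurd huv hu.1

theorem SuperDomSet.preimage_inl {S : Set (V ⊕ Fin 6)} (hS : SuperDomSet (attachPath6 G v) S)
    (hv : ¬(Sum.inr 2 ∈ S ∧
      (attachPath6 G v).neighborSet (Sum.inr 2) ∩ Sᶜ = {Sum.inl v})) :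
    SuperDomSet G (Sum.inl ⁻¹' S) := by
  intro u hu
  rcases hS.attachPath6_inl_witness hu with hb | ⟨-, hvS⟩
  exacts [hb, absurd hvS hv]

theorem SuperDomSet.attachPath6_inr_mem {S : Set (V ⊕ Fin 6)}
    (hS : SuperDomSet (attachPath6 G v) S) :
    (Sum.inr 0 ∈ S ∨ Sum.inr 1 ∈ S) ∧ (Sum.inr 4 ∈ S ∨ Sum.inr 5 ∈ S) ∧
      (Sum.inr 2 ∈ S ∨ Sum.inr 3 ∈ S ∨ Sum.inr 4 ∈ S ∧ Sum.inr 5 ∈ S) := by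
  refine ⟨?_, ?_, ?_⟩
  · by_contra! h
    obtain ⟨a | j, hw, hadj⟩ := hS.exists_adj h.1 <;> simp [pathGraph_adj] at hadj
    obtain rfl : j = 1 := by omega
    exact h.2 hw
  · by_contra! h
    obtain ⟨a | j, hw, hadj⟩ := hS.exists_adj h.2 <;> simp [pathGraph_adj] at hadj
    obtain rfl : j = 4 := by omega
    exact h.1 hw
  · by_contra! h
    obtain ⟨w, hw, hw3⟩ := hS _ h.2.1
    have hadj := adj_of_neighborSet_inter_compl_eq_singleton hw3
    obtain rfl : w = Sum.inr 4 := by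
      rcases w with a | j <;> simp [pathGraph_adj] at hadj
      obtain rfl | rfl : j = 2 ∨ j = 4 := by omega
      exacts [absurd hw h.1, rfl]
    exact h.2.2 hw (mem_of_neighborSet_inter_compl_eq_singleton hw3
      (by simp [pathGraph_adj]) (by simp))

theorem pathGraph_six_superDomSet_zero_three_four :
    SuperDomSet (pathGraph 6) {0, 3, 4} := by
  intro u hu
  fin_cases u <;> simp at hu
  · exact ⟨0, by simp, by ext x; fin_cases x <;> simp [pathGraph_adj]⟩
  · exact ⟨3, by simp, by ext x; fin_cases x <;> simp [pathGraph_adj]⟩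
  · exact ⟨4, by simp, by ext x; fin_cases x <;> simp [pathGraph_adj]⟩

theorem pathGraph_six_superDomSet_one_two_five :
    SuperDomSet (pathGraph 6) {1, 2, 5} := by
  intro u hu
  fin_cases u <;> simp at hu
  · exact ⟨1, by simp, by ext x; fin_cases x <;> simp [pathGraph_adj]⟩
  · exact ⟨2, by simp, by ext x; fin_cases x <;> simp [pathGraph_adj]⟩
  · exact ⟨5, by simp, by ext x; fin_cases x <;> simp [pathGraph_adj]⟩

theorem superDomNum_attachPath6_le [Finite V] (G : SimpleGraph V) (v : V) :
    superDomNum (attachPath6 G v) ≤ superDomNum G + 3 := by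
  obtain ⟨S, hS, hcard⟩ := exists_superDomSet_ncard_eq_superDomNum G
  obtain ⟨P, hP, hPcard, hvP⟩ : ∃ P : Set (Fin 6),
      SuperDomSet (pathGraph 6) P ∧ P.ncard = 3 ∧ (v ∈ S ↔ 2 ∈ P) := by
    by_cases hv : v ∈ S
    · exact ⟨_, pathGraph_six_superDomSet_one_two_five, by simp, by simp [hv]⟩
    · exact ⟨_, pathGraph_six_superDomSet_zero_three_four, by simp, by simp [hv]⟩
  have hT := (hS.sum hP).sup_edge (a := Sum.inl v) (b := Sum.inr 2) (by simpa using hvP)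
  rw [← attachPath6_eq_sum_sup_edge] at hT
  calc superDomNum (attachPath6 G v) ≤ _ := hT.superDomNum_le
    _ = superDomNum G + 3 := by
      rw [Set.ncard_image_inl_union_image_inr S.toFinite P.toFinite, hcard, hPcard]

theorem superDomNum_add_three_le_superDomNum_attachPath6 [Finite V] (G : SimpleGraph V) (v : V) :
    superDomNum G + 3 ≤ superDomNum (attachPath6 G v) := by
  classical
  obtain ⟨S, hS, hcard⟩ := exists_superDomSet_ncard_eq_superDomNum (attachPath6 G v)
  have hsplit : S.ncard = (Sum.inl ⁻¹' S).ncard + (Sum.inr ⁻¹' S).toFinset.card := by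
    rw [← Set.ncard_eq_toFinset_card', ← Set.ncard_image_inl_union_image_inr (Set.toFinite _)
      (Set.toFinite _), Set.image_preimage_inl_union_image_preimage_inr]
  obtain ⟨h01, h45, h23⟩ := hS.attachPath6_inr_mem
  by_cases hv : Sum.inr 2 ∈ S ∧
      (attachPath6 G v).neighborSet (Sum.inr 2) ∩ Sᶜ = {Sum.inl v}
  · -- `u₃` privately dominates `v`, so its other neighbours `u₂, u₄` lie in `S`
    have h1 := mem_of_neighborSet_inter_compl_eq_singleton hv.2
      (x := Sum.inr 1) (by simp [pathGraph_adj]) (by simp)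
    have h3 := mem_of_neighborSet_inter_compl_eq_singleton hv.2
      (x := Sum.inr 3) (by simp [pathGraph_adj]) (by simp)
    have h4 := four_le_card_of_fin6 (Sum.inr ⁻¹' S).toFinset (by simpa) (by simpa using hv.1)
      (by simpa) (by simpa)
    have := hS.insert_preimage_inl.superDomNum_le.trans (Set.ncard_insert_le _ _)
    omega
  · have h3 := three_le_card_of_fin6 (Sum.inr ⁻¹' S).toFinset (by simpa) (by simpa) (by simpa)
    have := (hS.preimage_inl hv).superDomNum_le
    omega

end AttachPath6

theorem InT.finite {W : Type} {G : SimpleGraph W} {L : W → Status} (h : InT W G L) : Finite W := by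
  induction h with
  | base => infer_instance
  | step _ _ _ ih => infer_instance

theorem superDomNum_attachPath6_general {W : Type} {G : SimpleGraph W} {L : W → Status}
    (h : InT W G L) (v : W) :
    superDomNum (attachPath6 G v) = superDomNum G + 3 :=
  have := h.finite
  (superDomNum_attachPath6_le G v).antisymm (superDomNum_add_three_le_superDomNum_attachPath6 G v)

/-- If `(T, S) ∈ 𝒯` is obtained from `(T', S') ∈ 𝒯` by operation 𝒪 applied at a
`B`-labeled vertex `v`, then `γ_sp(T) = γ_sp(T') + 3`. -/
theorem superDomNum_attachPath6 {W : Type} {G : SimpleGraph W} {L : W → Status}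
    (h : InT W G L) (v : W) (hv : L v = Status.B) :
    superDomNum (attachPath6 G v) = superDomNum G + 3 :=
  superDomNum_attachPath6_general h v
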